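/- Let p ∈ ℕ, α > 0, a ∈ (0,∞)^p, b ≥ 0, and y ∈ ℝ^p. Define gᵢ(x) = x − aᵢ·log x + b·x for x > 0 and G(x) = Σ_{i=1}^p gᵢ(xᵢ) for x ∈ (0,∞)^p. Then the unique minimizer over x ∈ (0,∞)^p of ½‖x − y‖₂² + α·G(x) is the vector whose i-th coordinate equals ½[ −α(b+1) + yᵢ + √((α(b+1) − yᵢ)² + 4αaᵢ) ]; i.e. the proximal operator of the separable sum G is computed coordinatewise by the scalar proximal formula. -/

import Mathlib

/-!
With `c = α (b + 1) - y`, the formula `s` is the positive root of `s² + c s = α a`, the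
first-order condition for the scalar objective `f t = ½ (t - y)² + α (t - a log t + b t)`.
Using `α a = s (s + c)` and `s log (t / s) ≤ t - s`, one gets the quadratic growth
`f s + ½ (t - s)² ≤ f t` for every `t > 0`. Summing over the coordinates gives the same
bound for the separable objective, which shows at once that the coordinatewise formula is a
minimizer and that any other minimizer has zero distance to it.
-/

open scoped BigOperators

/-- Separable proximal objective: `½ ‖x - y‖₂² + α * ∑ i, (x i - a i * log (x i) + b * x i)`. -/
noncomputable def sepProxObj {p : ℕ} (α b : ℝ) (a y : Fin p → ℝ) (x : Fin p → ℝ) : ℝ :=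
  (1 / 2) * ∑ i, (x i - y i) ^ 2 + α * ∑ i, (x i - a i * Real.log (x i) + b * x i)

noncomputable def scalarProxObj (α b a y t : ℝ) : ℝ :=
  (1 / 2) * (t - y) ^ 2 + α * (t - a * Real.log t + b * t)

noncomputable def scalarProx (α b a y : ℝ) : ℝ :=
  (1 / 2) * (-(α * (b + 1)) + y + Real.sqrt ((α * (b + 1) - y) ^ 2 + 4 * α * a))

lemma sepProxObj_eq_sum {p : ℕ} (α b : ℝ) (a y x : Fin p → ℝ) :
    sepProxObj α b a y x = ∑ i, scalarProxObj α b (a i) (y i) (x i) := by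
  simp only [sepProxObj, scalarProxObj, Finset.mul_sum, ← Finset.sum_add_distrib]

lemma scalarProx_pos {α b a y : ℝ} (hαa : 0 < α * a) : 0 < scalarProx α b a y := by
  have hlt : (α * (b + 1) - y) ^ 2 < (α * (b + 1) - y) ^ 2 + 4 * α * a := by linarith
  have hsqrt : α * (b + 1) - y < Real.sqrt ((α * (b + 1) - y) ^ 2 + 4 * α * a) :=
    Real.lt_sqrt_of_sq_lt hlt
  unfold scalarProx
  linarith

lemma scalarProx_sq_add_mul {α b a y : ℝ} (hαa : 0 ≤ α * a) :
    scalarProx α b a y ^ 2 + (α * (b + 1) - y) * scalarProx α b a y = α * a := by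
  have hsq := Real.sq_sqrt (by positivity : 0 ≤ (α * (b + 1) - y) ^ 2 + 4 * (α * a))
  unfold scalarProx
  rw [mul_assoc 4 α a]
  linear_combination hsq / 4

lemma mul_log_div_le_sub {s t : ℝ} (hs : 0 < s) (ht : 0 < t) : s * Real.log (t / s) ≤ t - s :=
  calc s * Real.log (t / s) ≤ s * (t / s - 1) :=
        mul_le_mul_of_nonneg_left (Real.log_le_sub_one_of_pos (by positivity)) hs.le
    _ = t - s := by field_simp

lemma scalarProxObj_add_sq_le {α b a y s t : ℝ} (hαa : 0 ≤ α * a) (hs : 0 < s) (ht : 0 < t)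
    (hroot : s ^ 2 + (α * (b + 1) - y) * s = α * a) :
    scalarProxObj α b a y s + (1 / 2) * (t - s) ^ 2 ≤ scalarProxObj α b a y t := by
  set c := α * (b + 1) - y
  have hsc : 0 ≤ s + c := nonneg_of_mul_nonneg_right (by linarith) hs
  have hlog := mul_le_mul_of_nonneg_left (mul_log_div_le_sub hs ht) hsc
  rw [Real.log_div ht.ne' hs.ne'] at hlog
  have hgap : scalarProxObj α b a y t - scalarProxObj α b a y s - (1 / 2) * (t - s) ^ 2
      = (s + c) * (t - s) - α * a * (Real.log t - Real.log s) := by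
    unfold scalarProxObj c; ring
  rw [← hroot] at hgap
  nlinarith

lemma isMinOn_and_eq_of_add_sum_sq_le {ι : Type*} [Fintype ι] {f : (ι → ℝ) → ℝ}
    {S : Set (ι → ℝ)} {s : ι → ℝ} (hs : s ∈ S)
    (hgrowth : ∀ x ∈ S, f s + ∑ i, (1 / 2) * (x i - s i) ^ 2 ≤ f x) :
    IsMinOn f S s ∧ ∀ z ∈ S, IsMinOn f S z → z = s := by
  have hnonneg : ∀ x : ι → ℝ, ∀ i ∈ Finset.univ, 0 ≤ (1 / 2) * (x i - s i) ^ 2 :=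
    fun _ _ _ => by positivity
  refine ⟨fun x hx => ?_, fun z hz hmin => ?_⟩
  · have := Finset.sum_nonneg (hnonneg x)
    show f s ≤ f x
    linarith [hgrowth x hx]
  · have hsum : ∑ i, (1 / 2) * (z i - s i) ^ 2 = 0 :=
      le_antisymm (by linarith [hgrowth z hz, isMinOn_iff.mp hmin s hs]) (Finset.sum_nonneg (hnonneg z))
    funext i
    have hi := (Finset.sum_eq_zero_iff_of_nonneg (hnonneg z)).mp hsum i (Finset.mem_univ i)
    nlinarith

theorem sepProx_coordinatewise {p : ℕ} (α b : ℝ) (a y : Fin p → ℝ)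
    (hα : 0 < α) (ha : ∀ i, 0 < a i) :
    (∀ i, 0 < (1 / 2) * (-(α * (b + 1)) + y i +
        Real.sqrt ((α * (b + 1) - y i) ^ 2 + 4 * α * a i))) ∧
    IsMinOn (sepProxObj α b a y) {x : Fin p → ℝ | ∀ i, 0 < x i}
      (fun i => (1 / 2) * (-(α * (b + 1)) + y i +
        Real.sqrt ((α * (b + 1) - y i) ^ 2 + 4 * α * a i))) ∧
    ∀ z : Fin p → ℝ, (∀ i, 0 < z i) →
      IsMinOn (sepProxObj α b a y) {x : Fin p → ℝ | ∀ i, 0 < x i} z →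
      z = fun i => (1 / 2) * (-(α * (b + 1)) + y i +
        Real.sqrt ((α * (b + 1) - y i) ^ 2 + 4 * α * a i)) := by
  have hαa : ∀ i, 0 < α * a i := fun i => mul_pos hα (ha i)
  have hpos : ∀ i, 0 < scalarProx α b (a i) (y i) := fun i => scalarProx_pos (hαa i)
  have hgrowth : ∀ x ∈ {x : Fin p → ℝ | ∀ i, 0 < x i},
      sepProxObj α b a y (fun i => scalarProx α b (a i) (y i))
        + ∑ i, (1 / 2) * (x i - scalarProx α b (a i) (y i)) ^ 2 ≤ sepProxObj α b a y x := by
    intro x hx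
    simp only [sepProxObj_eq_sum, ← Finset.sum_add_distrib]
    exact Finset.sum_le_sum fun i _ => scalarProxObj_add_sq_le (hαa i).le (hpos i) (hx i)
      (scalarProx_sq_add_mul (hαa i).le)
  obtain ⟨hmin, huniq⟩ := isMinOn_and_eq_of_add_sum_sq_le (S := {x | ∀ i, 0 < x i}) hpos hgrowth
  exact ⟨hpos, hmin, huniq⟩
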